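/- Let τ be a primitive substitution with fixed point X, u a non-empty prefix of X, v a non-empty prefix of the derived sequence D_u(X), and w = Θ_{X,u}(v)·u. Then w is a prefix of X, Θ_{X,u} ∘ Θ_{D_u(X),v} = Θ_{X,w}, and D_v(D_u(X)) = D_w(X). -/

import Mathlib

namespace Cobham

open Filter

variable {A : Type*} {B : Type*}

/-- The factor `X_i X_{i+1} ... X_{i+n-1}` of the sequence `X`. -/
def word (X : ℕ → A) (i n : ℕ) : List A := (List.range n).map fun k => X (i + k)

/-- `u` occurs in `X` at position `i`. -/
def OccursAt (X : ℕ → A) (u : List A) (i : ℕ) : Prop := word X i u.length = u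

def IsFactor (X : ℕ → A) (u : List A) : Prop := ∃ i, OccursAt X u i

def IsPrefix (X : ℕ → A) (u : List A) : Prop := OccursAt X u 0

/-- Uniformly recurrent: gaps between successive occurrences of any factor are bounded. -/
def UnifRec (X : ℕ → A) : Prop :=
  ∀ u, IsFactor X u → ∃ g : ℕ, ∀ i : ℕ, ∃ j, i ≤ j ∧ j ≤ i + g ∧ OccursAt X u j

/-- Return words on `u`: factors between two successive occurrences of `u` in `X`. -/
def ReturnWords (X : ℕ → A) (u : List A) : Set (List A) :=
  { v | ∃ i j, OccursAt X u i ∧ OccursAt X u j ∧ i < j ∧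
      (∀ k, i < k → k < j → ¬ OccursAt X u k) ∧ v = word X i (j - i) }

/-- Application of a morphism to a word, by concatenation. -/
def wordApply (σ : A → List B) (w : List A) : List B := w.flatMap σ

/-- Iterate of a morphism. -/
def mPow (σ : A → List A) : ℕ → A → List A
  | 0 => fun a => [a]
  | k + 1 => fun a => wordApply σ (mPow σ k a)

def Nonerasing (σ : A → List A) : Prop := ∀ a, σ a ≠ []

/-- Primitivity: some power of the morphism maps every letter to a word
containing every letter. -/
def Primitive (σ : A → List A) : Prop := ∃ k, 0 < k ∧ ∀ a b : A, b ∈ mPow σ k a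

/-- Primitivity restricted to a set of letters. -/
def PrimitiveOn (σ : A → List A) (S : Set A) : Prop :=
  ∃ k, 0 < k ∧ ∀ a ∈ S, ∀ b ∈ S, b ∈ mPow σ k a

/-- `X` is a fixed point of `σ`: the image of every prefix of `X` is a prefix of `X`. -/
def IsFixedPt (σ : A → List A) (X : ℕ → A) : Prop :=
  ∀ n, OccursAt X (wordApply σ (word X 0 n)) 0

def UltPeriodic (X : ℕ → A) : Prop :=
  ∃ N p : ℕ, 0 < p ∧ ∀ n, N ≤ n → X (n + p) = X n

def Periodic (X : ℕ → A) : Prop := ∃ p : ℕ, 0 < p ∧ ∀ n, X (n + p) = X n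

/-- `u` occurs at position `i` inside the word `w`. -/
def WOcc (u w : List A) (i : ℕ) : Prop :=
  i + u.length ≤ w.length ∧ (w.drop i).take u.length = u

/-- `D` is the derived sequence of `X` on `u`: a sequence of return words on `u`
whose concatenation is `X`. -/
def IsDerived (X : ℕ → A) (u : List A) (D : ℕ → List A) : Prop :=
  (∀ n, D n ∈ ReturnWords X u) ∧ ∀ n, OccursAt X ((word D 0 n).flatten) 0

/-- `τu` is the return substitution of `τ` on `u` (on the alphabet of return words):
`Θ_u ∘ τ_u = τ ∘ Θ_u`. -/
def RetSub (τ : A → List A) (X : ℕ → A) (u : List A)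
    (τu : List A → List (List A)) : Prop :=
  ∀ r ∈ ReturnWords X u,
    (∀ s ∈ τu r, s ∈ ReturnWords X u) ∧ (τu r).flatten = wordApply τ r

/-- Eigenvalue of a complex matrix. -/
def IsEig {n : Type*} [Fintype n] (M : Matrix n n ℂ) (μ : ℂ) : Prop :=
  ∃ v : n → ℂ, v ≠ 0 ∧ M.mulVec v = μ • v

/-- Incidence matrix of a morphism, as a complex matrix. -/
def incMat [Fintype A] [DecidableEq A] (σ : A → List A) : Matrix A A ℂ :=
  Matrix.of fun i j => (((σ j).count i : ℕ) : ℂ)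

/-- Incidence matrix of a return substitution, indexed by the set of return words. -/
def retMat [DecidableEq A] (τu : List A → List (List A)) (S : Set (List A))
    [Fintype S] : Matrix S S ℂ :=
  Matrix.of fun i j => (((τu (j : List A)).count (i : List A) : ℕ) : ℂ)

/-- `α` is the dominant eigenvalue of the incidence matrix of `σ`. -/
def IsDomEig [Fintype A] [DecidableEq A] (σ : A → List A) (α : ℝ) : Prop :=
  IsEig (incMat σ) (α : ℂ) ∧ ∀ μ : ℂ, IsEig (incMat σ) μ → ‖μ‖ ≤ α

/-- `X` is `α`-substitutive: the image under a letter-to-letter morphism of the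
fixed point of a primitive substitution with dominant eigenvalue `α`. -/
def IsSubstitutiveWith {A : Type*} (α : ℝ) (X : ℕ → A) : Prop :=
  ∃ (C : Type) (hF : Fintype C) (hD : DecidableEq C) (σ : C → List C) (c : C)
    (Y : ℕ → C) (ψ : C → A),
    Nonerasing σ ∧ (σ c).head? = some c ∧ Primitive σ ∧
    Y 0 = c ∧ IsFixedPt σ Y ∧ (∀ n, X n = ψ (Y n)) ∧ @IsDomEig C hF hD σ α

/-- Perron number: a real algebraic integer `α ≥ 1` strictly dominating the
absolute values of its other conjugates. -/
def IsPerron (α : ℝ) : Prop :=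
  1 ≤ α ∧ IsIntegral ℤ α ∧
    ∀ β : ℂ, Polynomial.aeval β (minpoly ℤ α) = 0 → β ≠ (α : ℂ) → ‖β‖ < α

/-! Write `Θ` for `List.flatten`, acting on words over the alphabet of return words. Since `D` is a
factorization of `X` into return words on `u`, and a return word `r` has no occurrence of `u` in
`r ++ u` other than at `0` and `r.length`, the occurrences of `u` in `X` are exactly the cut points
`|D 0 ⋯ D (n-1)|`. The same fact shows that two factorizations into return words that are both
followed by `u` at the same place of `X` agree. Hence `Θ v ++ u` occurs at the `n`-th cut point
exactly when `v` occurs at `n` in `D`, and `Θ` carries return words on `v` in `D` bijectively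
onto return words on `Θ v ++ u` in `X`. -/

section Words

variable {X : ℕ → A} {y z : List A} {p : ℕ}

@[simp]
lemma length_word (X : ℕ → A) (i n : ℕ) : (word X i n).length = n := by
  simp [word]

lemma word_add (X : ℕ → A) (i m n : ℕ) :
    word X i (m + n) = word X i m ++ word X (i + m) n := by
  simp only [word, List.range_add, List.map_append, List.map_map]
  congr 1
  exact List.map_congr_left fun k _ => by simp [Nat.add_assoc]

lemma word_one (X : ℕ → A) (i : ℕ) : word X i 1 = [X i] := by
  simp [word]

lemma mem_word {a : A} {i n : ℕ} : a ∈ word X i n ↔ ∃ k < n, X (i + k) = a := by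
  simp [word]

lemma occursAt_word (X : ℕ → A) (i n : ℕ) : OccursAt X (word X i n) i := by
  rw [OccursAt, length_word]

lemma occursAt_append_iff :
    OccursAt X (y ++ z) p ↔ OccursAt X y p ∧ OccursAt X z (p + y.length) := by
  rw [OccursAt, OccursAt, OccursAt, List.length_append, word_add]
  constructor
  · exact fun h => List.append_inj h (length_word ..)
  · rintro ⟨hy, hz⟩
    rw [hy, hz]

lemma OccursAt.of_prefix (hz : OccursAt X z p) (hyz : y <+: z) : OccursAt X y p := by
  obtain ⟨t, rfl⟩ := hyz
  exact (occursAt_append_iff.mp hz).1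

lemma OccursAt.prefix_of_length_le (hy : OccursAt X y p) (hz : OccursAt X z p)
    (h : y.length ≤ z.length) : y <+: z := by
  obtain ⟨k, hk⟩ := Nat.exists_eq_add_of_le h
  rw [← hy, ← hz, hk, word_add]
  exact List.prefix_append _ _

lemma OccursAt.eq_of_length_eq (hy : OccursAt X y p) (hz : OccursAt X z p)
    (h : y.length = z.length) : y = z :=
  (hy.prefix_of_length_le hz h.le).eq_of_length h

lemma OccursAt.word_add_eq {q t k : ℕ} (hp : OccursAt X z p) (hq : OccursAt X z q)
    (h : t + k ≤ z.length) : word X (p + t) k = word X (q + t) k := by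
  obtain ⟨m, hm⟩ := Nat.exists_eq_add_of_le h
  have hpq : word X p (t + k + m) = word X q (t + k + m) := by
    rw [← hm, hp, hq]
  rw [word_add, word_add, word_add X q, word_add X q] at hpq
  exact (List.append_inj (List.append_inj hpq (by simp)).1 (by simp)).2

lemma exists_le_lt_of_strictMono {f : ℕ → ℕ} (hf : StrictMono f) (h0 : f 0 = 0) (p : ℕ) :
    ∃ n, f n ≤ p ∧ p < f (n + 1) := by
  have hex : ∃ n, p < f n := ⟨p + 1, Nat.lt_of_succ_le (hf.id_le (p + 1))⟩
  obtain ⟨n, hn⟩ : ∃ n, Nat.find hex = n + 1 :=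
    Nat.exists_eq_succ_of_ne_zero fun h => by
      have := Nat.find_spec hex
      rw [h, h0] at this
      omega
  exact ⟨n, not_lt.mp (Nat.find_min hex (by omega)), hn ▸ Nat.find_spec hex⟩

end Words

section ReturnWords

variable {X : ℕ → A} {u r : List A}

lemma ne_nil_of_mem_returnWords (hr : r ∈ ReturnWords X u) : r ≠ [] := by
  obtain ⟨i, j, -, -, hij, -, rfl⟩ := hr
  rw [← List.length_pos_iff, length_word]
  omega

lemma exists_occursAt_of_mem_returnWords (hr : r ∈ ReturnWords X u) :
    ∃ i, OccursAt X u i ∧ OccursAt X (r ++ u) i ∧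
      ∀ t, 0 < t → t < r.length → ¬ OccursAt X u (i + t) := by
  obtain ⟨i, j, hi, hj, hij, hfree, rfl⟩ := hr
  refine ⟨i, hi, occursAt_append_iff.mpr ⟨occursAt_word .., ?_⟩, fun t ht₀ ht => ?_⟩
  · rwa [length_word, Nat.add_sub_cancel' hij.le]
  · rw [length_word] at ht
    exact hfree (i + t) (by omega) (by omega)

lemma prefix_append_of_mem_returnWords (hr : r ∈ ReturnWords X u) : u <+: r ++ u := by
  obtain ⟨i, hi, hri, -⟩ := exists_occursAt_of_mem_returnWords hr
  exact hi.prefix_of_length_le hri (by simp)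

lemma not_occursAt_of_mem_returnWords (hr : r ∈ ReturnWords X u) {p t : ℕ}
    (hp : OccursAt X (r ++ u) p) (ht₀ : 0 < t) (ht : t < r.length) :
    ¬ OccursAt X u (p + t) := by
  obtain ⟨i, -, hri, hfree⟩ := exists_occursAt_of_mem_returnWords hr
  rw [OccursAt, hp.word_add_eq hri (by simp; omega)]
  exact hfree t ht₀ ht

lemma eq_of_occursAt_append_returnWords {a a' : List A} (ha : a ∈ ReturnWords X u)
    (ha' : a' ∈ ReturnWords X u) {p : ℕ} (hp : OccursAt X (a ++ u) p)
    (hp' : OccursAt X (a' ++ u) p) : a = a' := by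
  wlog hle : a.length ≤ a'.length generalizing a a'
  · exact (this ha' ha hp' hp (by omega)).symm
  have hlen : a.length = a'.length := by
    by_contra hne
    exact not_occursAt_of_mem_returnWords ha' hp'
      (List.length_pos_iff.mpr (ne_nil_of_mem_returnWords ha)) (by omega)
      (occursAt_append_iff.mp hp).2
  exact (occursAt_append_iff.mp hp).1.eq_of_length_eq (occursAt_append_iff.mp hp').1 hlen

lemma prefix_flatten_append {l : List (List A)} (hl : ∀ r ∈ l, r ∈ ReturnWords X u) :
    u <+: l.flatten ++ u := by
  induction l with
  | nil => simp
  | cons a t ih =>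
    rw [List.flatten_cons, List.append_assoc]
    exact (prefix_append_of_mem_returnWords (hl a List.mem_cons_self)).trans
      ((List.prefix_append_right_inj a).mpr (ih fun r hr => hl r (List.mem_cons_of_mem a hr)))

lemma prefix_of_occursAt_flatten_append {l l' : List (List A)}
    (hl : ∀ r ∈ l, r ∈ ReturnWords X u) (hl' : ∀ r ∈ l', r ∈ ReturnWords X u) {p : ℕ}
    (hp : OccursAt X (l.flatten ++ u) p) (hp' : OccursAt X (l'.flatten ++ u) p)
    (hle : l.flatten.length ≤ l'.flatten.length) : l <+: l' := by
  induction l generalizing l' p with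
  | nil => exact List.nil_prefix
  | cons a t ih =>
    have ha := hl a List.mem_cons_self
    have ht : ∀ r ∈ t, r ∈ ReturnWords X u := fun r hr => hl r (List.mem_cons_of_mem a hr)
    cases l' with
    | nil => simp [ne_nil_of_mem_returnWords ha] at hle
    | cons a' t' =>
      have ha' := hl' a' List.mem_cons_self
      have ht' : ∀ r ∈ t', r ∈ ReturnWords X u :=
        fun r hr => hl' r (List.mem_cons_of_mem a' hr)
      rw [List.flatten_cons, List.append_assoc, occursAt_append_iff] at hp hp'
      obtain rfl : a = a' := eq_of_occursAt_append_returnWords ha ha'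
        (occursAt_append_iff.mpr ⟨hp.1, hp.2.of_prefix (prefix_flatten_append ht)⟩)
        (occursAt_append_iff.mpr ⟨hp'.1, hp'.2.of_prefix (prefix_flatten_append ht')⟩)
      exact (List.prefix_cons_inj a).mpr (ih ht ht' hp.2 hp'.2 (by simpa using hle))

lemma eq_of_occursAt_flatten_append {l l' : List (List A)}
    (hl : ∀ r ∈ l, r ∈ ReturnWords X u) (hl' : ∀ r ∈ l', r ∈ ReturnWords X u) {p : ℕ}
    (hp : OccursAt X (l.flatten ++ u) p) (h : l.flatten = l'.flatten) : l = l' := by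
  have hp' : OccursAt X (l'.flatten ++ u) p := h ▸ hp
  have hll' := prefix_of_occursAt_flatten_append hl hl' hp hp' (congrArg List.length h).le
  have hl'l := prefix_of_occursAt_flatten_append hl' hl hp' hp (congrArg List.length h).ge
  exact hll'.eq_of_length (hll'.length_le.antisymm hl'l.length_le)

end ReturnWords

def cutPoint (D : ℕ → List A) (n : ℕ) : ℕ := (word D 0 n).flatten.length

lemma cutPoint_zero (D : ℕ → List A) : cutPoint D 0 = 0 := by
  simp [cutPoint, word]

lemma cutPoint_add (D : ℕ → List A) (n k : ℕ) :
    cutPoint D (n + k) = cutPoint D n + (word D n k).flatten.length := by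
  simp [cutPoint, word_add]

lemma cutPoint_succ (D : ℕ → List A) (n : ℕ) :
    cutPoint D (n + 1) = cutPoint D n + (D n).length := by
  simp [cutPoint_add, word_one]

namespace IsDerived

variable {X : ℕ → A} {u : List A} {D : ℕ → List A} (hD : IsDerived X u D)
include hD

lemma mem_returnWords_of_mem_word {r : List A} {n k : ℕ} (hr : r ∈ word D n k) :
    r ∈ ReturnWords X u := by
  obtain ⟨j, -, rfl⟩ := mem_word.mp hr
  exact hD.1 _

lemma occursAt_flatten_word (n k : ℕ) : OccursAt X (word D n k).flatten (cutPoint D n) := by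
  have h := hD.2 (n + k)
  rw [word_add, Nat.zero_add, List.flatten_append, occursAt_append_iff, Nat.zero_add] at h
  exact h.2

lemma strictMono_cutPoint : StrictMono (cutPoint D) :=
  strictMono_nat_of_lt_succ fun n => by
    have := List.length_pos_iff.mpr (ne_nil_of_mem_returnWords (hD.1 n))
    rw [cutPoint_succ]
    omega

lemma le_length_flatten_word (n k : ℕ) : k ≤ (word D n k).flatten.length := by
  have := hD.strictMono_cutPoint.add_le_nat k n
  rw [Nat.add_comm k n, cutPoint_add] at this
  omega

lemma occursAt_cutPoint (n : ℕ) : OccursAt X u (cutPoint D n) := by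
  have hprefix : u <+: (word D n u.length).flatten ++ u :=
    prefix_flatten_append fun r => hD.mem_returnWords_of_mem_word
  exact (hD.occursAt_flatten_word n u.length).of_prefix <|
    List.prefix_of_prefix_length_le hprefix (List.prefix_append _ _)
      (hD.le_length_flatten_word n _)

lemma occursAt_flatten_word_append (n k : ℕ) :
    OccursAt X ((word D n k).flatten ++ u) (cutPoint D n) :=
  occursAt_append_iff.mpr
    ⟨hD.occursAt_flatten_word n k, cutPoint_add D n k ▸ hD.occursAt_cutPoint (n + k)⟩

lemma exists_cutPoint_eq {p : ℕ} (hp : OccursAt X u p) : ∃ n, cutPoint D n = p := by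
  obtain ⟨n, hn, hn'⟩ := exists_le_lt_of_strictMono hD.strictMono_cutPoint (cutPoint_zero D) p
  refine ⟨n, le_antisymm hn (not_lt.mp fun hlt => ?_)⟩
  have hDn := hD.occursAt_flatten_word_append n 1
  rw [word_one, List.flatten_singleton] at hDn
  rw [cutPoint_succ] at hn'
  exact not_occursAt_of_mem_returnWords (hD.1 n) hDn (t := p - cutPoint D n) (by omega)
    (by omega) (by rwa [Nat.add_sub_cancel' hn])

lemma occursAt_flatten_append_iff {l : List (List A)} (hl : ∀ r ∈ l, r ∈ ReturnWords X u)
    {p : ℕ} : OccursAt X (l.flatten ++ u) p ↔ ∃ n, cutPoint D n = p ∧ OccursAt D l n := by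
  constructor
  · intro hp
    obtain ⟨n, rfl⟩ := hD.exists_cutPoint_eq (hp.of_prefix (prefix_flatten_append hl))
    have hw := hD.occursAt_flatten_word_append n l.length
    have hwl : ∀ r ∈ word D n l.length, r ∈ ReturnWords X u :=
      fun r => hD.mem_returnWords_of_mem_word
    refine ⟨n, rfl, ?_⟩
    rcases le_total l.flatten.length (word D n l.length).flatten.length with h | h
    · exact ((prefix_of_occursAt_flatten_append hl hwl hp hw h).eq_of_length (by simp)).symm
    · exact (prefix_of_occursAt_flatten_append hwl hl hw hp h).eq_of_length (by simp)
  · rintro ⟨n, rfl, hn⟩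
    have := hD.occursAt_flatten_word_append n l.length
    rwa [hn] at this

lemma flatten_word_sub {n n' : ℕ} (h : n ≤ n') :
    (word D n (n' - n)).flatten = word X (cutPoint D n) (cutPoint D n' - cutPoint D n) := by
  have hlen := cutPoint_add D n (n' - n)
  rw [Nat.add_sub_cancel' h] at hlen
  rw [← hD.occursAt_flatten_word n (n' - n), hlen, Nat.add_sub_cancel_left]

lemma mem_returnWords_of_isPrefix {v : List (List A)} (hv : IsPrefix D v) :
    ∀ r ∈ v, r ∈ ReturnWords X u := by
  intro r hr
  rw [← hv] at hr
  exact hD.mem_returnWords_of_mem_word hr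

variable {v : List (List A)} (hv : ∀ r ∈ v, r ∈ ReturnWords X u)
include hv

lemma flatten_mem_returnWords {r : List (List A)} (hr : r ∈ ReturnWords D v) :
    r.flatten ∈ ReturnWords X (v.flatten ++ u) := by
  obtain ⟨n, n', hn, hn', hlt, hfree, rfl⟩ := hr
  refine ⟨cutPoint D n, cutPoint D n', (hD.occursAt_flatten_append_iff hv).mpr ⟨n, rfl, hn⟩,
    (hD.occursAt_flatten_append_iff hv).mpr ⟨n', rfl, hn'⟩, hD.strictMono_cutPoint hlt,
    fun q hq hq' hocc => ?_, hD.flatten_word_sub hlt.le⟩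
  obtain ⟨j, rfl, hj⟩ := (hD.occursAt_flatten_append_iff hv).mp hocc
  exact hfree j (hD.strictMono_cutPoint.lt_iff_lt.mp hq)
    (hD.strictMono_cutPoint.lt_iff_lt.mp hq') hj

lemma exists_flatten_eq {s : List A} (hs : s ∈ ReturnWords X (v.flatten ++ u)) :
    ∃ r ∈ ReturnWords D v, r.flatten = s := by
  obtain ⟨p, p', hp, hp', hlt, hfree, rfl⟩ := hs
  obtain ⟨n, rfl, hn⟩ := (hD.occursAt_flatten_append_iff hv).mp hp
  obtain ⟨n', rfl, hn'⟩ := (hD.occursAt_flatten_append_iff hv).mp hp'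
  have hnn := hD.strictMono_cutPoint.lt_iff_lt.mp hlt
  refine ⟨word D n (n' - n), ⟨n, n', hn, hn', hnn, fun j hj hj' hocc => ?_, rfl⟩,
    hD.flatten_word_sub hnn.le⟩
  exact hfree _ (hD.strictMono_cutPoint hj) (hD.strictMono_cutPoint hj')
    ((hD.occursAt_flatten_append_iff hv).mpr ⟨j, rfl, hocc⟩)

omit hv in
lemma injOn_flatten : Set.InjOn List.flatten (ReturnWords D v) := by
  rintro _ ⟨n, n', -, -, -, -, rfl⟩ _ ⟨m, m', -, -, -, -, rfl⟩ h
  exact eq_of_occursAt_flatten_append (fun r => hD.mem_returnWords_of_mem_word)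
    (fun r => hD.mem_returnWords_of_mem_word) (hD.occursAt_flatten_word_append n _) h

lemma isDerived_flatten {E : ℕ → List (List A)} (hE : IsDerived D v E) :
    IsDerived X (v.flatten ++ u) fun n => (E n).flatten := by
  refine ⟨fun n => hD.flatten_mem_returnWords hv (hE.1 n), fun n => ?_⟩
  have h := hD.2 (word E 0 n).flatten.length
  rw [show word D 0 _ = _ from hE.2 n] at h
  have hword : word (fun k => (E k).flatten) 0 n = (word E 0 n).map List.flatten := by
    simp [word]
  rwa [hword, ← List.flatten_flatten]

end IsDerived

theorem stmt18_general {A : Type*} (X : ℕ → A) (u : List A) (D : ℕ → List A) (hD : IsDerived X u D)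
    (v : List (List A)) (hvpre : IsPrefix D v) :
    IsPrefix X (v.flatten ++ u) ∧
    Set.BijOn List.flatten (ReturnWords D v) (ReturnWords X (v.flatten ++ u)) ∧
    ∀ E : ℕ → List (List A), IsDerived D v E →
      IsDerived X (v.flatten ++ u) (fun n => (E n).flatten) := by
  have hv := hD.mem_returnWords_of_isPrefix hvpre
  refine ⟨?_, ⟨?_, hD.injOn_flatten, ?_⟩, fun E => hD.isDerived_flatten hv⟩
  · exact (hD.occursAt_flatten_append_iff hv).mpr ⟨0, cutPoint_zero D, hvpre⟩
  · exact fun r => hD.flatten_mem_returnWords hv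
  · exact fun s => hD.exists_flatten_eq hv

theorem stmt18 {A : Type*} (X : ℕ → A) (hX : UnifRec X)
    (u : List A) (hu : u ≠ []) (hpre : IsPrefix X u)
    (D : ℕ → List A) (hD : IsDerived X u D)
    (v : List (List A)) (hv : v ≠ []) (hvpre : IsPrefix D v) :
    IsPrefix X (v.flatten ++ u) ∧
    Set.BijOn List.flatten (ReturnWords D v) (ReturnWords X (v.flatten ++ u)) ∧
    ∀ E : ℕ → List (List A), IsDerived D v E →
      IsDerived X (v.flatten ++ u) (fun n => (E n).flatten) :=
  stmt18_general X u D hD v hvpre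

end Cobham
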